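/- arXiv:2401.15747 — 2 statements merged into one kernel-verified Lean document; each statement's English description precedes it below -/
import Mathlib

section
/- For the homogeneous heterodimer ODE system with k12*k0/k1 > k1t, the diseased equilibrium (k1t/k12, (k12*k0 - k1*k1t)/(k12*k1t)) is linearly asymptotically stable: the Jacobian there has trace strictly negative and determinant strictly positive. -/
/-!
At the diseased equilibrium `k12 * p' = k1t`, so the Jacobian has a zero in its lower-right
corner. Its trace is then the upper-left entry `-k1 - k12 * q' < 0`, and its determinant is
minus the product of the off-diagonal entries, `k1t * (k12 * q') > 0`; both signs come from
`q' > 0`, which is exactly the threshold condition `k12 * k0 > k1 * k1t`.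
-/

theorem Matrix.trace_neg_and_det_pos_of_fin_two {a b c : ℝ} (ha : a < 0) (hbc : b * c < 0) :
    (!![a, b; c, 0] : Matrix (Fin 2) (Fin 2) ℝ).trace < 0 ∧
      0 < (!![a, b; c, 0] : Matrix (Fin 2) (Fin 2) ℝ).det := by
  rw [Matrix.trace_fin_two_of, Matrix.det_fin_two_of]
  constructor <;> linarith

theorem heterodimer_diseased_stable_general (k0 k1 k1t k12 : ℝ)
    (hk1 : 0 < k1) (hk1t : 0 < k1t) (hk12 : 0 < k12)
    (hgrow : k12 * k0 > k1 * k1t) :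
    -- Jacobian of (p,q) ↦ (-k1*p - k12*p*q + k0, -k1t*q + k12*p*q)
    -- at p* = k1t/k12, q* = (k12*k0 - k1*k1t)/(k12*k1t)
    let p' : ℝ := k1t / k12
    let q' : ℝ := (k12 * k0 - k1 * k1t) / (k12 * k1t)
    let J : Matrix (Fin 2) (Fin 2) ℝ :=
      !![-k1 - k12 * q', -k12 * p';
         k12 * q', -k1t + k12 * p']
    J.trace < 0 ∧ 0 < J.det := by
  intro p' q' J
  have hp : k12 * p' = k1t := mul_div_cancel₀ k1t hk12.ne'
  have hq : 0 < k12 * q' := mul_pos hk12 (div_pos (sub_pos.mpr hgrow) (mul_pos hk12 hk1t))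
  have hJ : J = !![-k1 - k12 * q', -k12 * p'; k12 * q', 0] := by
    simp only [J, hp, neg_add_cancel]
  rw [hJ]
  apply Matrix.trace_neg_and_det_pos_of_fin_two
  · linarith
  · rw [neg_mul, hp, neg_mul, neg_lt_zero]
    exact mul_pos hk1t hq

/-- If `k12*k0 > k1*k1t`, the diseased equilibrium
`(k1t/k12, (k12*k0 - k1*k1t)/(k12*k1t))` of the homogeneous heterodimer system
is linearly asymptotically stable: the Jacobian there has strictly negative
trace and strictly positive determinant. -/
theorem heterodimer_diseased_stable (k0 k1 k1t k12 : ℝ)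
    (hk0 : 0 < k0) (hk1 : 0 < k1) (hk1t : 0 < k1t) (hk12 : 0 < k12)
    (hgrow : k12 * k0 > k1 * k1t) :
    -- Jacobian of (p,q) ↦ (-k1*p - k12*p*q + k0, -k1t*q + k12*p*q)
    -- at p* = k1t/k12, q* = (k12*k0 - k1*k1t)/(k12*k1t)
    let p' : ℝ := k1t / k12
    let q' : ℝ := (k12 * k0 - k1 * k1t) / (k12 * k1t)
    let J : Matrix (Fin 2) (Fin 2) ℝ :=
      !![-k1 - k12 * q', -k12 * p';
         k12 * q', -k1t + k12 * p']
    J.trace < 0 ∧ 0 < J.det :=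
  heterodimer_diseased_stable_general k0 k1 k1t k12 hk1 hk1t hk12 hgrow
end

section
/- For the fully-discrete Fisher-Kolmogorov problem: if M is symmetric positive definite, A is symmetric positive semidefinite, M_α is symmetric with M_α ≤ ᾱ M (in the sense of quadratic forms), Δt < 2/ᾱ, and the nonlinear matrix M̂ is positive semidefinite, then the system matrix M/Δt + (A − M_α)/2 + M̂/2 is positive definite, hence invertible, so each Crank-Nicolson step has a unique solution. -/
open Matrix

/-- Well-posedness of each Crank–Nicolson step for the fully-discrete
Fisher–Kolmogorov problem: if `M` is SPD, `A` and `M̂` are symmetric positive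
semidefinite, `M_α` is symmetric with `xᵀM_αx ≤ ᾱ·xᵀMx`, and `Δt < 2/ᾱ`, then
the system matrix `S = M/Δt + ½A − ½M_α + ½M̂` is positive definite, hence
invertible, so each step has a unique solution. -/
theorem crank_nicolson_step_unique_solution
    (N : ℕ) (M A Mα Mhat : Matrix (Fin N) (Fin N) ℝ)
    (hM : M.PosDef) (hA : A.PosSemidef) (hMhat : Mhat.PosSemidef)
    (hMα : Mα.IsSymm)
    (αbar : ℝ) (hαbar : 0 < αbar)
    (hMαbound : ∀ x : Fin N → ℝ, x ⬝ᵥ Mα.mulVec x ≤ αbar * (x ⬝ᵥ M.mulVec x))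
    (Δt : ℝ) (hΔt : 0 < Δt) (hΔt2 : Δt < 2 / αbar) :
    let S : Matrix (Fin N) (Fin N) ℝ :=
      (1 / Δt) • M + (1 / 2 : ℝ) • A - (1 / 2 : ℝ) • Mα + (1 / 2 : ℝ) • Mhat
    S.PosDef ∧ ∀ b : Fin N → ℝ, ∃! x : Fin N → ℝ, S.mulVec x = b := by
  intro S
  have hMαh : Mα.IsHermitian := by
    rwa [Matrix.IsHermitian, Matrix.conjTranspose_eq_transpose_of_trivial]
  have hsmul : ∀ (c : ℝ) (H : Matrix (Fin N) (Fin N) ℝ), H.IsHermitian →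
      (c • H).IsHermitian := by
    intro c H h
    unfold Matrix.IsHermitian at *
    rw [Matrix.conjTranspose_smul, h]
    simp
  have hSsym : S.IsHermitian := by
    have h1 := hsmul (1 / Δt) M hM.1
    have h2 := hsmul (1 / 2) A hA.1
    have h3 := hsmul (1 / 2) Mα hMαh
    have h4 := hsmul (1 / 2) Mhat hMhat.1
    exact ((h1.add h2).sub h3).add h4
  have hkey : αbar / 2 < 1 / Δt := by
    have h2 := (lt_div_iff₀ hαbar).mp hΔt2
    rw [div_lt_div_iff₀ two_pos hΔt]
    nlinarith
  have hSpd : S.PosDef := by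
    refine Matrix.posDef_iff_dotProduct_mulVec.mpr ⟨hSsym, fun x hx => ?_⟩
    have hexp : x ⬝ᵥ S.mulVec x =
        (1 / Δt) * (x ⬝ᵥ M.mulVec x) + (1 / 2) * (x ⬝ᵥ A.mulVec x)
          - (1 / 2) * (x ⬝ᵥ Mα.mulVec x) + (1 / 2) * (x ⬝ᵥ Mhat.mulVec x) := by
      simp [S, Matrix.add_mulVec, Matrix.sub_mulVec, Matrix.smul_mulVec,
        dotProduct_add, dotProduct_sub, dotProduct_smul, smul_eq_mul]
    have hMx : 0 < x ⬝ᵥ M.mulVec x := (Matrix.posDef_iff_dotProduct_mulVec.mp hM).2 hx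
    have hAx : 0 ≤ x ⬝ᵥ A.mulVec x := (Matrix.posSemidef_iff_dotProduct_mulVec.mp hA).2 x
    have hMhx : 0 ≤ x ⬝ᵥ Mhat.mulVec x := (Matrix.posSemidef_iff_dotProduct_mulVec.mp hMhat).2 x
    have hbd := hMαbound x
    rw [show (star x : Fin N → ℝ) = x from funext fun i => rfl, hexp]
    nlinarith
  refine ⟨hSpd, fun b => ?_⟩
  have hunit : IsUnit S := hSpd.isUnit
  have hinj : Function.Injective S.mulVec := Matrix.mulVec_injective_iff_isUnit.mpr hunit
  haveI := hunit.invertible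
  refine ⟨S⁻¹.mulVec b, ?_, fun y hy => ?_⟩
  · show S *ᵥ S⁻¹ *ᵥ b = b
    rw [Matrix.mulVec_mulVec, Matrix.mul_nonsing_inv _ (Matrix.isUnit_iff_isUnit_det _ |>.mp hunit), Matrix.one_mulVec]
  · apply hinj
    rw [hy, Matrix.mulVec_mulVec, Matrix.mul_nonsing_inv _ (Matrix.isUnit_iff_isUnit_det _ |>.mp hunit), Matrix.one_mulVec]
end
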